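/- In the interpreted system IS_T constructed from a dispute tree T, every path from the initial global state corresponds to a dispute in T: the sequence of arguments recorded in the environment's local state along any path is a sequence a₀ = a, a₁, a₂, … such that (a_{i+1}, a_i) ∈ Att for all i, with arguments at even positions played by Pro and odd positions by Opp. -/
import Mathlib


/-- Whose turn it is to put forward an argument. -/
inductive Turn where
  | Pro : Turn
  | Opp : Turn
deriving DecidableEq

/-- Actions of the agents: one attack action per attack of the framework, plus the
action `nothing`. -/
inductive ISAction (α : Type*) where
  | attack (x y : α) : ISAction α
  | nothing : ISAction α

/-- A global state of the interpreted system `IS_T`: the local states of `Pro`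
(its last played argument), of `Opp` (its last played argument, or `none` for
`empty`), and of the environment (whose turn it is, the last played argument of the
dispute, and the attacks seen so far). -/
structure GState (α : Type*) where
  lpro : α
  lopp : Option α
  turn : Turn
  last : α
  seen : Set (α × α)

/-- The initial global state `(a, empty, (Opp, a, ∅))` of `IS_T`. -/
def initState {α : Type*} (a : α) : GState α :=
  ⟨a, none, Turn.Opp, a, ∅⟩

/-- The protocol of player `me` at global state `g`: if it is `me`'s turn and the
last played argument is attacked, the enabled actions are the attacks against the
last played argument; otherwise the only enabled action is `nothing`. -/
def enabled {α : Type*} (att : α → α → Prop) (me : Turn) (g : GState α) :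
    Set (ISAction α) :=
  {act | (g.turn = me ∧ ∃ x, att x g.last ∧ act = ISAction.attack x g.last) ∨
         ((g.turn ≠ me ∨ ¬ ∃ x, att x g.last) ∧ act = ISAction.nothing)}

/-- The global transition relation of `IS_T`: the player whose turn it is plays an
attacker `x` of the last played argument; its local state becomes `x`, and the
environment records the other player's turn, the new last argument `x`, and the new
attack seen. -/
inductive ISTrans {α : Type*} (att : α → α → Prop) : GState α → GState α → Prop
  | pro {g : GState α} {x : α} : g.turn = Turn.Pro → att x g.last →
      ISTrans att g ⟨x, g.lopp, Turn.Opp, x, insert (x, g.last) g.seen⟩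
  | opp {g : GState α} {x : α} : g.turn = Turn.Opp → att x g.last →
      ISTrans att g ⟨g.lpro, some x, Turn.Pro, x, insert (x, g.last) g.seen⟩

/-- A global state is reachable if it can be obtained from the initial state by a
finite sequence of transitions. -/
def Reachable {α : Type*} (att : α → α → Prop) (a : α) (g : GState α) : Prop :=
  Relation.ReflTransGen (ISTrans att) (initState a) g

lemma ISTrans.props {α : Type*} {att : α → α → Prop} {g g' : GState α}
    (h : ISTrans att g g') :
    att g'.last g.last ∧ (g.turn = Turn.Opp ↔ g'.turn = Turn.Pro) := by
  cases h with
  | pro h1 h2 => simp [h1, h2]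
  | opp h1 h2 => simp [h1, h2]

/-- Every path of `IS_T` from the initial global state corresponds to a dispute in
the dispute tree `T` induced by `a`: the sequence of last played arguments recorded
by the environment along the path starts at `a`, each argument attacks its
predecessor, and the arguments at even positions are played by `Pro` (so the turn
recorded at even positions is `Opp`) while those at odd positions are played by
`Opp` (the turn recorded is `Pro`). -/
theorem path_is_dispute {α : Type*} (att : α → α → Prop) (a : α) (N : ℕ)
    (π : ℕ → GState α) (h0 : π 0 = initState a)
    (hstep : ∀ n, n + 1 ≤ N → ISTrans att (π n) (π (n + 1))) :
    (π 0).last = a ∧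
    (∀ n, n + 1 ≤ N → att ((π (n + 1)).last) ((π n).last)) ∧
    (∀ n, n ≤ N → Even n → (π n).turn = Turn.Opp) ∧
    (∀ n, n ≤ N → ¬ Even n → (π n).turn = Turn.Pro) := by
  have hatt : ∀ n, n + 1 ≤ N → att ((π (n + 1)).last) ((π n).last) := by
    intro n hn
    exact (hstep n hn).props.1
  have hflip : ∀ n, n + 1 ≤ N →
      ((π n).turn = Turn.Opp ↔ (π (n+1)).turn = Turn.Pro) := by
    intro n hn
    exact (hstep n hn).props.2
  have hturn : ∀ n, n ≤ N → (π n).turn = (if Even n then Turn.Opp else Turn.Pro) := by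
    intro n
    induction n with
    | zero => intro _; simp [h0, initState]
    | succ k ih =>
      intro hk
      have hk' : k ≤ N := Nat.le_of_succ_le hk
      have hturnk := ih hk'
      have hfl := hflip k hk
      by_cases he : Even k
      · have : (π k).turn = Turn.Opp := by simpa [he] using hturnk
        have : (π (k+1)).turn = Turn.Pro := hfl.mp this
        simp [Nat.even_add_one, he, this]
      · have hP : (π k).turn = Turn.Pro := by simpa [he] using hturnk
        have : (π (k+1)).turn = Turn.Opp := by
          by_contra hC
          have : (π (k+1)).turn = Turn.Pro := by
            cases h : (π (k+1)).turn <;> simp_all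
          have := hfl.mpr this
          simp [hP] at this
        simp [Nat.even_add_one, he, this]
  refine ⟨by simp [h0, initState], hatt, ?_, ?_⟩
  · intro n hn he; simpa [he] using hturn n hn
  · intro n hn he; simpa [he] using hturn n hn
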